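/- arXiv:2302.00961 — 5 statements merged into one kernel-verified Lean document; each statement's English description precedes it below -/
import Mathlib

section
/- Let X ⊆ ℝⁿ be nonempty closed convex, X* ⊆ X nonempty closed convex, and let V : X → ℝ be convex and differentiable with V(x*) = 0 for all x* ∈ X*, V ≥ 0 on X. Suppose ⟨∇V(x*), z⟩ ≥ γ‖z‖ for all x* ∈ X* and all z ∈ T_X(x*) ∩ N_{X*}(x*), where γ > 0. Then V(x) ≥ γ·d(x, X*) for all x ∈ X. -/
/-!
Project `x` onto `Xs`: the residual `z = x - x*` realises the distance, lies in the normal cone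
of `Xs` at `x*` by the variational characterisation of the projection, and lies in the tangent
cone of `X` at `x*` because `x ∈ X`. The gradient inequality of the convex `V` at `x*`, where
`V` vanishes, then gives `V x ≥ ⟪∇V(x*), z⟫ ≥ γ ‖z‖ = γ d(x, Xs)`.
-/

open Metric

/-- Polar of a set in a real inner product space. -/
def polarSet {E : Type*} [NormedAddCommGroup E] [InnerProductSpace ℝ E] (S : Set E) : Set E :=
  {v | ∀ z ∈ S, (inner ℝ v z : ℝ) ≤ 0}

/-- Normal cone to a set `X` at a point `x`. -/
def normalCone {E : Type*} [NormedAddCommGroup E] [InnerProductSpace ℝ E]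
    (X : Set E) (x : E) : Set E :=
  {v | ∀ z ∈ X, (inner ℝ v (z - x) : ℝ) ≤ 0}

/-- Tangent cone: polar of the normal cone. -/
def tangentConeSet {E : Type*} [NormedAddCommGroup E] [InnerProductSpace ℝ E]
    (X : Set E) (x : E) : Set E :=
  polarSet (normalCone X x)

theorem ConvexOn.add_fderiv_sub_le {E : Type*} [NormedAddCommGroup E] [NormedSpace ℝ E]
    {s : Set E} {f : E → ℝ} {f' : E →L[ℝ] ℝ} {a b : E} (hf : ConvexOn ℝ s f)
    (ha : a ∈ s) (hb : b ∈ s) (hfa : HasFDerivAt f f' a) :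
    f a + f' (b - a) ≤ f b := by
  let L := AffineMap.lineMap (k := ℝ) a b
  have hline : ConvexOn ℝ (L ⁻¹' s) (f ∘ L) := hf.comp_affineMap L
  have hderiv : HasDerivAt (f ∘ L) (f' (b - a)) 0 := by
    have hfL : HasFDerivAt f f' (L 0) := by simpa [L] using hfa
    exact hfL.comp_hasDerivAt 0 AffineMap.hasDerivAt_lineMap
  have hslope := hline.le_slope_of_hasDerivAt (x := 0) (y := 1) (by simpa [L] using ha)
    (by simpa [L] using hb) zero_lt_one hderiv
  simp only [slope_def_field, Function.comp_apply, L, AffineMap.lineMap_apply_zero,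
    AffineMap.lineMap_apply_one, sub_zero, div_one] at hslope
  linarith

theorem ConvexOn.add_inner_gradient_sub_le {E : Type*} [NormedAddCommGroup E]
    [InnerProductSpace ℝ E] [CompleteSpace E] {s : Set E} {f : E → ℝ} {g a b : E}
    (hf : ConvexOn ℝ s f) (ha : a ∈ s) (hb : b ∈ s) (hfa : HasGradientAt f g a) :
    f a + inner ℝ g (b - a) ≤ f b := by
  simpa using hf.add_fderiv_sub_le ha hb hfa.hasFDerivAt

section Cones

variable {E : Type*} [NormedAddCommGroup E] [InnerProductSpace ℝ E]

theorem sub_mem_tangentConeSet {X : Set E} {x : E} (hx : x ∈ X) (y : E) :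
    x - y ∈ tangentConeSet X y :=
  fun v hv => real_inner_comm v (x - y) ▸ hv x hx

theorem exists_infDist_eq_norm_sub_mem_normalCone {K : Set E} (hne : K.Nonempty)
    (hK : IsComplete K) (hconv : Convex ℝ K) (x : E) :
    ∃ y ∈ K, infDist x K = ‖x - y‖ ∧ x - y ∈ normalCone K y := by
  obtain ⟨y, hy, hmin⟩ := exists_norm_eq_iInf_of_complete_convex hne hK hconv x
  refine ⟨y, hy, ?_, (norm_eq_iInf_iff_real_inner_le_zero hconv hy).1 hmin⟩
  simp only [hmin, infDist_eq_iInf, dist_eq_norm]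

end Cones

theorem stmt3_general {n : ℕ} (X Xs : Set (EuclideanSpace ℝ (Fin n)))
    (hXsne : Xs.Nonempty) (hXscl : IsClosed Xs) (hXsconv : Convex ℝ Xs) (hXsX : Xs ⊆ X)
    (V : EuclideanSpace ℝ (Fin n) → ℝ) (V' : EuclideanSpace ℝ (Fin n) → EuclideanSpace ℝ (Fin n))
    (hVconv : ConvexOn ℝ X V)
    (hVdiff : ∀ x ∈ X, HasGradientAt V (V' x) x)
    (hVzero : ∀ xs ∈ Xs, V xs = 0)
    (γ : ℝ)
    (hsharp : ∀ xs ∈ Xs, ∀ z ∈ tangentConeSet X xs ∩ normalCone Xs xs,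
      γ * ‖z‖ ≤ (inner ℝ (V' xs) z : ℝ)) :
    ∀ x ∈ X, γ * Metric.infDist x Xs ≤ V x := by
  intro x hx
  obtain ⟨y, hy, hdist, hnormal⟩ :=
    exists_infDist_eq_norm_sub_mem_normalCone hXsne hXscl.isComplete hXsconv x
  have hsharp_y := hsharp y hy (x - y) ⟨sub_mem_tangentConeSet hx y, hnormal⟩
  have hgrad := hVconv.add_inner_gradient_sub_le (hXsX hy) hx (hVdiff y (hXsX hy))
  rw [hVzero y hy, zero_add] at hgrad
  rw [hdist]
  linarith

theorem stmt3 {n : ℕ} (X Xs : Set (EuclideanSpace ℝ (Fin n)))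
    (hXne : X.Nonempty) (hXcl : IsClosed X) (hXconv : Convex ℝ X)
    (hXsne : Xs.Nonempty) (hXscl : IsClosed Xs) (hXsconv : Convex ℝ Xs) (hXsX : Xs ⊆ X)
    (V : EuclideanSpace ℝ (Fin n) → ℝ) (V' : EuclideanSpace ℝ (Fin n) → EuclideanSpace ℝ (Fin n))
    (hVconv : ConvexOn ℝ X V)
    (hVdiff : ∀ x ∈ X, HasGradientAt V (V' x) x)
    (hVzero : ∀ xs ∈ Xs, V xs = 0) (hVnonneg : ∀ x ∈ X, 0 ≤ V x)
    (γ : ℝ) (hγ : 0 < γ)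
    (hsharp : ∀ xs ∈ Xs, ∀ z ∈ tangentConeSet X xs ∩ normalCone Xs xs,
      γ * ‖z‖ ≤ (inner ℝ (V' xs) z : ℝ)) :
    ∀ x ∈ X, γ * Metric.infDist x Xs ≤ V x :=
  stmt3_general X Xs hXsne hXscl hXsconv hXsX V V' hVconv hVdiff hVzero γ hsharp
end

section
/- Let X ⊆ ℝⁿ be nonempty closed convex, X* ⊆ X closed convex, V : X → ℝ differentiable, with V(x*) = 0 for all x* ∈ X* and V(x) ≥ γ·d(x, X*) for all x ∈ X, where γ > 0. Then for every x* ∈ X* and every nonzero s ∈ T_X(x*) ∩ N_{X*}(x*), we have ⟨∇V(x*), s⟩ ≥ γ‖s‖. -/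
/-!
The function `W y = ‖s‖ V y - γ ⟪s, y - x*⟫` is nonnegative on `X` and vanishes at `x*`:
since `s` is normal to `X*` at `x*`, the hyperplane through `x*` orthogonal to `s` separates
`x* + s` from `X*`, so `⟪s, y - x*⟫ ≤ ‖s‖ d(y, X*) ≤ ‖s‖ V y / γ`. Hence `x*` minimises `W` on
the convex set `X`, and the first-order optimality condition puts `γ s - ‖s‖ ∇V(x*)` in the
normal cone of `X` at `x*`. Pairing it with the tangent vector `s` gives
`γ ‖s‖² ≤ ‖s‖ ⟪∇V(x*), s⟫`.
-/

open Metric InnerProductSpace RealInnerProductSpace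

section

variable {E : Type*} [NormedAddCommGroup E] [InnerProductSpace ℝ E]

theorem inner_sub_le_norm_mul_infDist_of_mem_normalCone {S : Set E} {x s : E}
    (hS : S.Nonempty) (hs : s ∈ normalCone S x) (y : E) :
    ⟪s, y - x⟫ ≤ ‖s‖ * infDist y S := by
  rcases eq_or_ne s 0 with rfl | hs0
  · simp
  have hpos : 0 < ‖s‖ := norm_pos_iff.2 hs0
  rw [← div_le_iff₀' hpos, le_infDist hS]
  intro z hz
  rw [div_le_iff₀' hpos, dist_eq_norm]
  calc ⟪s, y - x⟫ = ⟪s, y - z⟫ + ⟪s, z - x⟫ := by rw [← inner_add_right, sub_add_sub_cancel]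
    _ ≤ ‖s‖ * ‖y - z‖ + 0 := add_le_add (real_inner_le_norm s _) (hs z hz)
    _ = ‖s‖ * ‖y - z‖ := add_zero _

variable [CompleteSpace E]

theorem neg_mem_normalCone_of_isMinOn {X : Set E} {f : E → ℝ} {f' x : E}
    (hX : Convex ℝ X) (hx : x ∈ X) (hmin : IsMinOn f X x) (hf : HasGradientAt f f' x) :
    -f' ∈ normalCone X x := by
  intro y hy
  have := hmin.localize.hasFDerivWithinAt_nonneg hf.hasFDerivAt.hasFDerivWithinAt
    (sub_mem_posTangentConeAt_of_segment_subset (hX.segment_subset hx hy))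
  simpa [inner_neg_left] using this

theorem HasGradientAt.const_mul {f : E → ℝ} {f' x : E} (hf : HasGradientAt f f' x) (c : ℝ) :
    HasGradientAt (fun y => c * f y) (c • f') x := by
  rw [hasGradientAt_iff_hasFDerivAt] at hf ⊢
  simpa using hf.const_mul c

theorem HasGradientAt.sub {f g : E → ℝ} {f' g' x : E} (hf : HasGradientAt f f' x)
    (hg : HasGradientAt g g' x) : HasGradientAt (fun y => f y - g y) (f' - g') x := by
  rw [hasGradientAt_iff_hasFDerivAt] at hf hg ⊢
  rw [map_sub]
  exact hf.sub hg

theorem hasGradientAt_inner_sub (s z x : E) : HasGradientAt (fun y => ⟪s, y - z⟫) s x := by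
  rw [hasGradientAt_iff_hasFDerivAt]
  simpa [inner_sub_right] using ((toDual ℝ E s).hasFDerivAt (x := x)).sub_const ⟪s, z⟫

end

theorem stmt4_general {n : ℕ} (X Xs : Set (EuclideanSpace ℝ (Fin n)))
    (hXconv : Convex ℝ X) (hXsX : Xs ⊆ X)
    (V : EuclideanSpace ℝ (Fin n) → ℝ) (V' : EuclideanSpace ℝ (Fin n) → EuclideanSpace ℝ (Fin n))
    (hVdiff : ∀ x ∈ X, HasGradientAt V (V' x) x)
    (hVzero : ∀ xs ∈ Xs, V xs = 0)
    (γ : ℝ) (hγ : 0 < γ)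
    (herr : ∀ x ∈ X, γ * Metric.infDist x Xs ≤ V x) :
    ∀ xs ∈ Xs, ∀ s ∈ tangentConeSet X xs ∩ normalCone Xs xs, s ≠ 0 →
      γ * ‖s‖ ≤ (inner ℝ (V' xs) s : ℝ) := by
  intro xs hxs s ⟨hsT, hsN⟩ hs0
  have hxsX : xs ∈ X := hXsX hxs
  have hmin : IsMinOn (fun y => ‖s‖ * V y - γ * ⟪s, y - xs⟫) X xs := fun y hy => by
    have hsep := inner_sub_le_norm_mul_infDist_of_mem_normalCone ⟨xs, hxs⟩ hsN y
    simp only [Set.mem_ofPred_eq, hVzero xs hxs, sub_self, inner_zero_right, mul_zero]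
    nlinarith [herr y hy, norm_nonneg s]
  have hgrad := ((hVdiff xs hxsX).const_mul ‖s‖).sub ((hasGradientAt_inner_sub s xs xs).const_mul γ)
  have hpolar := hsT _ (neg_mem_normalCone_of_isMinOn hXconv hxsX hmin hgrad)
  rw [neg_sub, inner_sub_right, real_inner_smul_right, real_inner_smul_right,
    real_inner_self_eq_norm_mul_norm, real_inner_comm] at hpolar
  have hpos : 0 < ‖s‖ := norm_pos_iff.2 hs0
  nlinarith

theorem stmt4 {n : ℕ} (X Xs : Set (EuclideanSpace ℝ (Fin n)))
    (hXne : X.Nonempty) (hXcl : IsClosed X) (hXconv : Convex ℝ X)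
    (hXscl : IsClosed Xs) (hXsconv : Convex ℝ Xs) (hXsX : Xs ⊆ X)
    (V : EuclideanSpace ℝ (Fin n) → ℝ) (V' : EuclideanSpace ℝ (Fin n) → EuclideanSpace ℝ (Fin n))
    (hVdiff : ∀ x ∈ X, HasGradientAt V (V' x) x)
    (hVzero : ∀ xs ∈ Xs, V xs = 0)
    (γ : ℝ) (hγ : 0 < γ)
    (herr : ∀ x ∈ X, γ * Metric.infDist x Xs ≤ V x) :
    ∀ xs ∈ Xs, ∀ s ∈ tangentConeSet X xs ∩ normalCone Xs xs, s ≠ 0 →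
      γ * ‖s‖ ≤ (inner ℝ (V' xs) s : ℝ) :=
  stmt4_general X Xs hXconv hXsX V V' hVdiff hVzero γ hγ herr
end

section
/- For the regularized Nikaido–Isoda function ψ_a of a jointly convex GNEP with ψ_a(·,y) convex for each y ∈ X: for every normalized Nash equilibrium x* ∈ X* and every x ∈ X, ψ_a(x, x*) ≥ 0. Consequently ψ_a is negatively pseudomonotone on X* with respect to X (i.e., ψ_a(x*, x) ≤ 0 and ψ_a(x, x*) ≥ 0 for all x* ∈ X*, x ∈ X). -/
/-- The regularized Nikaido–Isoda function of a GNEP with loss functions `θ i`: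
`ψ_a(x,y) = Σ_i [θ_i(x) − θ_i(x_{-i},y_i) − (a/2)‖x_i − y_i‖²]`. -/
noncomputable def psiReg {N : ℕ} {d : Fin N → ℕ}
    (θ : Fin N → (PiLp 2 fun i => EuclideanSpace ℝ (Fin (d i))) → ℝ) (a : ℝ)
    (x y : PiLp 2 fun i => EuclideanSpace ℝ (Fin (d i))) : ℝ :=
  ∑ i, (θ i x - θ i (WithLp.toLp 2 (Function.update x i (y i))) - a / 2 * ‖x i - y i‖ ^ 2)

/-- The VI operator `F(x) = (∇_{x_i} θ_i(x))_i` of a jointly convex GNEP. -/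
noncomputable def gnepF {N : ℕ} {d : Fin N → ℕ}
    (θ : Fin N → (PiLp 2 fun i => EuclideanSpace ℝ (Fin (d i))) → ℝ)
    (x : PiLp 2 fun i => EuclideanSpace ℝ (Fin (d i))) :
    PiLp 2 fun i => EuclideanSpace ℝ (Fin (d i)) :=
  WithLp.toLp 2 (fun i => gradient (fun zi => θ i (WithLp.toLp 2 (Function.update x i zi))) (x i))

open Filter Topology

theorem HasDerivAt.le_of_eventually_le_add_mul {φ : ℝ → ℝ} {φ' c x : ℝ} (hφ : HasDerivAt φ φ' x)
    (hle : ∀ᶠ t in 𝓝[>] 0, φ (x + t) ≤ φ x + t * c) : φ' ≤ c := by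
  refine le_of_tendsto hφ.tendsto_slope_zero_right ?_
  filter_upwards [hle, self_mem_nhdsWithin] with t ht (htpos : 0 < t)
  rw [smul_eq_mul, inv_mul_le_iff₀ htpos]
  linarith

theorem HasFDerivAt.hasDerivAt_sub_sub_zero {E : Type*} [NormedAddCommGroup E] [NormedSpace ℝ E]
    {f : E → ℝ} {f' : E →L[ℝ] ℝ} {p : E} (hf : HasFDerivAt f f' p) (v w : E) :
    HasDerivAt (fun t : ℝ => f (p + t • v) - f (p + t • (v - w)) - f (p + t • w)) 0 0 := by
  have line : ∀ u : E, HasDerivAt (fun t : ℝ => f (p + t • u)) (f' u) 0 := fun u => by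
    have hline : HasDerivAt (fun t : ℝ => p + t • u) u 0 := by
      simpa using ((hasDerivAt_id (0 : ℝ)).smul_const u).const_add p
    exact (by simpa using hf : HasFDerivAt f f' (p + (0 : ℝ) • u)).comp_hasDerivAt 0 hline
  have := ((line v).sub (line (v - w))).sub (line w)
  rwa [map_sub, sub_sub_cancel, sub_self] at this

theorem PiLp.toLp_update_eq_add_single {ι : Type*} [DecidableEq ι] {β : ι → Type*}
    [∀ i, AddCommGroup (β i)] (p : ENNReal) (x : PiLp p β) (i : ι) (c : β i) :
    WithLp.toLp p (Function.update x i c) = x + PiLp.single p i (c - x i) := by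
  rw [Pi.update_eq_sub_add_single, PiLp.single_sub, WithLp.toLp_add, WithLp.toLp_sub,
    WithLp.toLp_ofLp, PiLp.toLp_single, PiLp.toLp_single]
  abel

theorem PiLp.single_smul {ι : Type*} [DecidableEq ι] {𝕜 : Type*} [Semiring 𝕜] {β : ι → Type*}
    [∀ i, SeminormedAddCommGroup (β i)] [∀ i, Module 𝕜 (β i)] (p : ENNReal) (i : ι) (r : 𝕜)
    (b : β i) : PiLp.single p i (r • b) = r • PiLp.single p i b := by
  rw [← PiLp.toLp_single, Pi.single_smul, WithLp.toLp_smul, PiLp.toLp_single]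

section
variable {N : ℕ} {d : Fin N → ℕ}

local notation "E" => PiLp 2 fun i => EuclideanSpace ℝ (Fin (d i))

theorem psiReg_self (θ : Fin N → E → ℝ) (a : ℝ) (x : E) : psiReg θ a x x = 0 := by
  simp [psiReg, Function.update_eq_self]

theorem psiReg_add_smul_add_psiReg (θ : Fin N → E → ℝ) (a : ℝ) (p v : E) (t : ℝ) :
    psiReg θ a (p + t • v) p + psiReg θ a p (p + t • v) =
      ∑ i, (θ i (p + t • v) - θ i (p + t • (v - PiLp.single 2 i (v i)))
        - θ i (p + t • PiLp.single 2 i (v i)) + θ i p - a * t ^ 2 * ‖v i‖ ^ 2) := by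
  rw [psiReg, psiReg, ← Finset.sum_add_distrib]
  refine Finset.sum_congr rfl fun i _ => ?_
  rw [PiLp.toLp_update_eq_add_single, PiLp.toLp_update_eq_add_single]
  simp only [PiLp.add_apply, PiLp.smul_apply, add_sub_cancel_left, sub_add_cancel_left, norm_neg,
    norm_smul, PiLp.single_neg, PiLp.single_smul, Real.norm_eq_abs, mul_pow, sq_abs]
  rw [smul_sub, ← sub_eq_add_neg, add_sub_assoc]
  ring

theorem hasDerivAt_psiReg_add_smul_add_psiReg (θ : Fin N → E → ℝ) (a : ℝ) {p : E}
    (hθ : ∀ i, DifferentiableAt ℝ (θ i) p) (v : E) :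
    HasDerivAt (fun t : ℝ => psiReg θ a (p + t • v) p + psiReg θ a p (p + t • v)) 0 0 := by
  simp_rw [psiReg_add_smul_add_psiReg]
  have quadratic : HasDerivAt (fun t : ℝ => a * t ^ 2) 0 0 := by
    simpa using (hasDerivAt_pow 2 (0 : ℝ)).const_mul a
  simpa using HasDerivAt.fun_sum fun i _ =>
    (((hθ i).hasFDerivAt.hasDerivAt_sub_sub_zero v (PiLp.single 2 i (v i))).add_const
      (θ i p)).sub (quadratic.mul_const (‖v i‖ ^ 2))

end

theorem stmt8_general {N : ℕ} {d : Fin N → ℕ}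
    (X : Set (PiLp 2 fun i => EuclideanSpace ℝ (Fin (d i))))
    (hXconv : Convex ℝ X)
    (θ : Fin N → (PiLp 2 fun i => EuclideanSpace ℝ (Fin (d i))) → ℝ)
    (hθdiff : ∀ i, ContDiff ℝ 1 (θ i))
    (a : ℝ)
    (hψconv : ∀ y ∈ X, ConvexOn ℝ X (fun x => psiReg θ a x y))
    (Xs : Set (PiLp 2 fun i => EuclideanSpace ℝ (Fin (d i))))
    (hXs : Xs = {xs | xs ∈ X ∧ ∀ y ∈ X, psiReg θ a xs y ≤ 0}) :
    ∀ xs ∈ Xs, ∀ x ∈ X, 0 ≤ psiReg θ a x xs ∧ psiReg θ a xs x ≤ 0 := by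
  subst hXs
  rintro xs ⟨hxs, hNE⟩ x hx
  refine ⟨?_, hNE x hx⟩
  have hθ i : DifferentiableAt ℝ (θ i) xs := (hθdiff i).differentiable one_ne_zero xs
  refine (hasDerivAt_psiReg_add_smul_add_psiReg θ a hθ (x - xs)).le_of_eventually_le_add_mul ?_
  filter_upwards [Ioc_mem_nhdsGT zero_lt_one] with t ⟨ht0, ht1⟩
  have hseg : xs + t • (x - xs) = (1 - t) • xs + t • x := by module
  have hmem : xs + t • (x - xs) ∈ X := hseg ▸ hXconv hxs hx (by linarith) ht0.le (by ring)
  have hconv : psiReg θ a (xs + t • (x - xs)) xs ≤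
      (1 - t) * psiReg θ a xs xs + t * psiReg θ a x xs :=
    hseg ▸ (hψconv xs hxs).2 hxs hx (by linarith) ht0.le (by ring)
  have hequil : psiReg θ a xs (xs + t • (x - xs)) ≤ 0 := hNE _ hmem
  simp only [zero_add, zero_smul, add_zero, psiReg_self] at hconv ⊢
  linarith

theorem stmt8 {N : ℕ} {d : Fin N → ℕ}
    (X : Set (PiLp 2 fun i => EuclideanSpace ℝ (Fin (d i))))
    (hXne : X.Nonempty) (hXcl : IsClosed X) (hXconv : Convex ℝ X)
    (θ : Fin N → (PiLp 2 fun i => EuclideanSpace ℝ (Fin (d i))) → ℝ)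
    (hθdiff : ∀ i, ContDiff ℝ 1 (θ i))
    (hθconv : ∀ i x, ConvexOn ℝ Set.univ
      (fun zi : EuclideanSpace ℝ (Fin (d i)) => θ i (WithLp.toLp 2 (Function.update x i zi))))
    (a : ℝ) (ha : 0 < a)
    (hψconv : ∀ y ∈ X, ConvexOn ℝ X (fun x => psiReg θ a x y))
    (Xs : Set (PiLp 2 fun i => EuclideanSpace ℝ (Fin (d i))))
    (hXs : Xs = {xs | xs ∈ X ∧ ∀ y ∈ X, psiReg θ a xs y ≤ 0}) :
    ∀ xs ∈ Xs, ∀ x ∈ X, 0 ≤ psiReg θ a x xs ∧ psiReg θ a xs x ≤ 0 :=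
  stmt8_general X hXconv θ hθdiff a hψconv Xs hXs
end

section
/- (Fejér monotonicity of the proximal sequence.) Let X ⊆ ℝⁿ be nonempty closed convex, ψ : X × X → ℝ with ψ(x,x) = 0, let X* = {x* ∈ X : ψ(x*,y) ≤ 0 ∀y ∈ X} be nonempty, and assume ψ(x, x*) ≥ 0 for all x ∈ X, x* ∈ X*. Let {x_k} ⊆ X satisfy the proximal inequality ψ(x_{k+1}, z) − (1/r_k)⟨z − x_{k+1}, x_{k+1} − x_k⟩ ≤ 0 for all z ∈ X, with r_k > 0. Then for every x* ∈ X*, ‖x_{k+1} − x_k‖² ≤ ‖x* − x_k‖² − ‖x* − x_{k+1}‖² for all k. -/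
/-! Testing the proximal inequality at `x* ∈ X*`, where `ψ(x_{k+1}, x*) ≥ 0`, gives
`⟪x* - x_{k+1}, x_{k+1} - x_k⟫ ≥ 0`; expanding `‖x* - x_k‖²` around `x_{k+1}` turns this
into the claimed inequality. -/

section

variable {E : Type*} [NormedAddCommGroup E] [InnerProductSpace ℝ E]

theorem norm_sub_sq_le_of_inner_nonneg {a b z : E} (h : 0 ≤ inner ℝ (z - b) (b - a)) :
    ‖b - a‖ ^ 2 ≤ ‖z - a‖ ^ 2 - ‖z - b‖ ^ 2 := by
  have hsplit : ‖z - a‖ ^ 2 = ‖z - b‖ ^ 2 + 2 * inner ℝ (z - b) (b - a) + ‖b - a‖ ^ 2 := by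
    rw [← norm_add_sq_real, sub_add_sub_cancel]
  linarith

theorem norm_sub_sq_le_of_proximal_step {ψ : E → E → ℝ} {r : ℝ} {a b z : E} (hr : 0 < r)
    (hstep : ψ b z - (1 / r) * inner ℝ (z - b) (b - a) ≤ 0) (hψ : 0 ≤ ψ b z) :
    ‖b - a‖ ^ 2 ≤ ‖z - a‖ ^ 2 - ‖z - b‖ ^ 2 := by
  have hscaled : 0 ≤ (1 / r) * inner ℝ (z - b) (b - a) := by linarith
  exact norm_sub_sq_le_of_inner_nonneg (nonneg_of_mul_nonneg_right hscaled (one_div_pos.mpr hr))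

end

theorem stmt11_general {n : ℕ} (X : Set (EuclideanSpace ℝ (Fin n)))
    (ψ : EuclideanSpace ℝ (Fin n) → EuclideanSpace ℝ (Fin n) → ℝ)
    (Xs : Set (EuclideanSpace ℝ (Fin n)))
    (hXs : Xs = {xs | xs ∈ X ∧ ∀ y ∈ X, ψ xs y ≤ 0})
    (hpm : ∀ x ∈ X, ∀ xs ∈ Xs, 0 ≤ ψ x xs)
    (x : ℕ → EuclideanSpace ℝ (Fin n)) (hxX : ∀ k, x k ∈ X)
    (r : ℕ → ℝ) (hr : ∀ k, 0 < r k)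
    (hiter : ∀ k, ∀ z ∈ X,
      ψ (x (k + 1)) z - (1 / r k) * (inner ℝ (z - x (k + 1)) (x (k + 1) - x k) : ℝ) ≤ 0) :
    ∀ xs ∈ Xs, ∀ k, ‖x (k + 1) - x k‖ ^ 2 ≤ ‖xs - x k‖ ^ 2 - ‖xs - x (k + 1)‖ ^ 2 := by
  intro xs hxs k
  have hxsX : xs ∈ X := by
    rw [hXs] at hxs
    exact hxs.1
  exact norm_sub_sq_le_of_proximal_step (hr k) (hiter k xs hxsX) (hpm _ (hxX (k + 1)) xs hxs)

theorem stmt11 {n : ℕ} (X : Set (EuclideanSpace ℝ (Fin n)))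
    (hXne : X.Nonempty) (hXcl : IsClosed X) (hXconv : Convex ℝ X)
    (ψ : EuclideanSpace ℝ (Fin n) → EuclideanSpace ℝ (Fin n) → ℝ)
    (hdiag : ∀ x ∈ X, ψ x x = 0)
    (Xs : Set (EuclideanSpace ℝ (Fin n)))
    (hXs : Xs = {xs | xs ∈ X ∧ ∀ y ∈ X, ψ xs y ≤ 0}) (hXsne : Xs.Nonempty)
    (hpm : ∀ x ∈ X, ∀ xs ∈ Xs, 0 ≤ ψ x xs)
    (x : ℕ → EuclideanSpace ℝ (Fin n)) (hxX : ∀ k, x k ∈ X)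
    (r : ℕ → ℝ) (hr : ∀ k, 0 < r k)
    (hiter : ∀ k, ∀ z ∈ X,
      ψ (x (k + 1)) z - (1 / r k) * (inner ℝ (z - x (k + 1)) (x (k + 1) - x k) : ℝ) ≤ 0) :
    ∀ xs ∈ Xs, ∀ k, ‖x (k + 1) - x k‖ ^ 2 ≤ ‖xs - x k‖ ^ 2 - ‖xs - x (k + 1)‖ ^ 2 :=
  stmt11_general X ψ Xs hXs hpm x hxX r hr hiter
end

section
/- (Iteration complexity bound.) In the setting of the finite termination theorem, additionally assume 1/r_k ∈ (0, ε) for all k, for some ε > 0. Let k₀ be the least natural number such that ‖x_{k+1} − x_k‖ < γ/ε for all k ≥ k₀. Then x_k ∈ X* for all k > k₀ and k₀ ≤ d(x₀, X*)²·ε²/γ². -/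
/-!
The proximal inequality tested at a solution `xs` gives `⟪xs - x_{k+1}, x_{k+1} - x_k⟫ ≥ 0`, hence
strong Fejér monotonicity `‖x_{k+1} - xs‖² + ‖x_{k+1} - x_k‖² ≤ ‖x_k - xs‖²`. Tested at the projection
`p` of `x_{k+1}`, together with linear conditioning it gives
`γ ‖x_{k+1} - p‖ ≤ (1/r_k) ‖x_{k+1} - p‖ ‖x_{k+1} - x_k‖`, so a step shorter than `γ/ε` lands on a
solution, after which the sequence is stationary. Hence every step before `k₀` has length at least
`γ/ε`, and summing the Fejér inequalities bounds `k₀ (γ/ε)²` by `d(x₀, X*)²`.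
-/

open Finset

lemma Metric.infDist_eq_dist_of_forall_dist_le {α : Type*} [PseudoMetricSpace α] {x p : α}
    {s : Set α} (hp : p ∈ s) (hmin : ∀ w ∈ s, dist x p ≤ dist x w) :
    Metric.infDist x s = dist x p :=
  le_antisymm (Metric.infDist_le_dist_of_mem hp) ((Metric.le_infDist ⟨p, hp⟩).2 hmin)

variable {E : Type*} [NormedAddCommGroup E]

section InnerProductSpace

variable [InnerProductSpace ℝ E]

lemma norm_sub_sq_add_norm_sub_sq_le_of_inner_nonneg {x y z : E}
    (h : 0 ≤ inner ℝ (z - y) (y - x)) : ‖y - z‖ ^ 2 + ‖y - x‖ ^ 2 ≤ ‖x - z‖ ^ 2 := by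
  have hsplit : x - z = -(y - x) + (y - z) := by abel
  have hinner : inner ℝ (-(y - x)) (y - z) = inner ℝ (z - y) (y - x) := by
    rw [← neg_sub z y, inner_neg_neg, real_inner_comm]
  rw [hsplit, norm_add_sq_real, hinner, norm_neg]
  linarith

lemma eq_of_mul_norm_sub_le_mul_inner {x y p : E} {γ c : ℝ} (hc : 0 ≤ c)
    (hstep : c * ‖y - x‖ < γ) (h : γ * ‖y - p‖ ≤ c * inner ℝ (p - y) (y - x)) : y = p := by
  have hcs : c * inner ℝ (p - y) (y - x) ≤ ‖y - p‖ * (c * ‖y - x‖) := by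
    calc c * inner ℝ (p - y) (y - x) ≤ c * (‖p - y‖ * ‖y - x‖) :=
          mul_le_mul_of_nonneg_left (real_inner_le_norm _ _) hc
      _ = ‖y - p‖ * (c * ‖y - x‖) := by rw [norm_sub_rev]; ring
  have hzero : ‖y - p‖ = 0 := by
    by_contra hne
    have hpos : 0 < ‖y - p‖ := (norm_nonneg _).lt_of_ne' hne
    nlinarith [mul_lt_mul_of_pos_left hstep hpos]
  exact sub_eq_zero.1 (norm_eq_zero.1 hzero)

end InnerProductSpace

def IsStronglyFejerMonotone (S : Set E) (x : ℕ → E) : Prop :=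
  ∀ k, ∀ xs ∈ S, ‖x (k + 1) - xs‖ ^ 2 + ‖x (k + 1) - x k‖ ^ 2 ≤ ‖x k - xs‖ ^ 2

namespace IsStronglyFejerMonotone

variable {S : Set E} {x : ℕ → E}

lemma eq_of_mem_of_le (hx : IsStronglyFejerMonotone S x) {m : ℕ} (hm : x m ∈ S) :
    ∀ k, m ≤ k → x k = x m := by
  intro k hk
  induction k, hk using Nat.le_induction with
  | base => rfl
  | succ k _ ih =>
    have h := hx k (x m) hm
    rw [ih, sub_self, norm_zero] at h
    have hsq : ‖x (k + 1) - x m‖ ^ 2 = 0 := by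
      nlinarith [sq_nonneg ‖x (k + 1) - x m‖]
    simpa [sub_eq_zero] using hsq

lemma sum_sq_norm_sub_le (hx : IsStronglyFejerMonotone S x) {xs : E} (hxs : xs ∈ S) (m : ℕ) :
    ∑ v ∈ range m, ‖x (v + 1) - x v‖ ^ 2 ≤ ‖x 0 - xs‖ ^ 2 := by
  suffices h : ∀ m, ∑ v ∈ range m, ‖x (v + 1) - x v‖ ^ 2 + ‖x m - xs‖ ^ 2 ≤ ‖x 0 - xs‖ ^ 2 by
    linarith [h m, sq_nonneg ‖x m - xs‖]
  intro m
  induction m with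
  | zero => simp
  | succ m ih =>
    rw [sum_range_succ]
    linarith [hx m xs hxs]

lemma le_norm_sub_of_lt_of_isLeast (hx : IsStronglyFejerMonotone S x) {δ : ℝ} (hδ : 0 < δ)
    (hland : ∀ k, ‖x (k + 1) - x k‖ < δ → x (k + 1) ∈ S) {k₀ : ℕ}
    (hk₀ : IsLeast {m | ∀ k ≥ m, ‖x (k + 1) - x k‖ < δ} k₀) {v : ℕ} (hv : v < k₀) :
    δ ≤ ‖x (v + 1) - x v‖ := by
  by_contra! hshort
  have hconst := hx.eq_of_mem_of_le (hland v hshort)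
  have hvmem : ∀ k ≥ v, ‖x (k + 1) - x k‖ < δ := by
    intro k hk
    rcases hk.eq_or_lt with rfl | hlt
    · exact hshort
    · rw [hconst (k + 1) (by omega), hconst k hlt, sub_self, norm_zero]
      exact hδ
  exact (hk₀.2 hvmem).not_gt hv

lemma card_mul_sq_le (hx : IsStronglyFejerMonotone S x) {δ : ℝ} (hδ : 0 < δ)
    (hland : ∀ k, ‖x (k + 1) - x k‖ < δ → x (k + 1) ∈ S) {k₀ : ℕ}
    (hk₀ : IsLeast {m | ∀ k ≥ m, ‖x (k + 1) - x k‖ < δ} k₀) {xs : E} (hxs : xs ∈ S) :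
    (k₀ : ℝ) * δ ^ 2 ≤ ‖x 0 - xs‖ ^ 2 := by
  calc (k₀ : ℝ) * δ ^ 2 = ∑ _v ∈ range k₀, δ ^ 2 := by simp
    _ ≤ ∑ v ∈ range k₀, ‖x (v + 1) - x v‖ ^ 2 := by
        gcongr with v hv
        exact hx.le_norm_sub_of_lt_of_isLeast hδ hland hk₀ (mem_range.1 hv)
    _ ≤ ‖x 0 - xs‖ ^ 2 := hx.sum_sq_norm_sub_le hxs k₀

end IsStronglyFejerMonotone

theorem stmt14_general {n : ℕ} (X : Set (EuclideanSpace ℝ (Fin n)))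
    (ψ : EuclideanSpace ℝ (Fin n) → EuclideanSpace ℝ (Fin n) → ℝ)
    (Xs : Set (EuclideanSpace ℝ (Fin n)))
    (hXs : Xs = {xs | xs ∈ X ∧ ∀ y ∈ X, ψ xs y ≤ 0})
    (hpm : ∀ x ∈ X, ∀ xs ∈ Xs, 0 ≤ ψ x xs)
    (proj : EuclideanSpace ℝ (Fin n) → EuclideanSpace ℝ (Fin n))
    (hproj : ∀ x, proj x ∈ Xs ∧ ∀ w ∈ Xs, dist x (proj x) ≤ dist x w)
    (γ : ℝ) (hγ : 0 < γ)
    (hlin : ∀ x ∈ X, γ * Metric.infDist x Xs ≤ ψ x (proj x))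
    (x : ℕ → EuclideanSpace ℝ (Fin n)) (hxX : ∀ k, x k ∈ X)
    (r : ℕ → ℝ) (hr : ∀ k, 0 < r k)
    (ε : ℝ) (hε : 0 < ε) (hrε : ∀ k, 1 / r k < ε)
    (hiter : ∀ k, ∀ z ∈ X,
      ψ (x (k + 1)) z ≤ (1 / r k) * (inner ℝ (z - x (k + 1)) (x (k + 1) - x k) : ℝ))
    (k₀ : ℕ)
    (hk₀ : IsLeast {m : ℕ | ∀ k ≥ m, ‖x (k + 1) - x k‖ < γ / ε} k₀) :
    (∀ k > k₀, x k ∈ Xs) ∧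
      (k₀ : ℝ) ≤ Metric.infDist (x 0) Xs ^ 2 * ε ^ 2 / γ ^ 2 := by
  have hXsX : Xs ⊆ X := hXs ▸ fun _ hy ↦ hy.1
  have hdist : ∀ y, Metric.infDist y Xs = ‖y - proj y‖ := fun y ↦ by
    rw [Metric.infDist_eq_dist_of_forall_dist_le (hproj y).1 (hproj y).2, dist_eq_norm]
  have hfejer : IsStronglyFejerMonotone Xs x := fun k xs hxs ↦
    norm_sub_sq_add_norm_sub_sq_le_of_inner_nonneg <| nonneg_of_mul_nonneg_right
      ((hpm _ (hxX _) xs hxs).trans (hiter k xs (hXsX hxs))) (one_div_pos.2 (hr k))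
  have hland : ∀ k, ‖x (k + 1) - x k‖ < γ / ε → x (k + 1) ∈ Xs := by
    intro k hshort
    have hstep : 1 / r k * ‖x (k + 1) - x k‖ < γ :=
      calc 1 / r k * ‖x (k + 1) - x k‖ ≤ ε * ‖x (k + 1) - x k‖ := by gcongr; exact (hrε k).le
        _ < ε * (γ / ε) := by gcongr
        _ = γ := mul_div_cancel₀ γ hε.ne'
    have hfix : x (k + 1) = proj (x (k + 1)) :=
      eq_of_mul_norm_sub_le_mul_inner (one_div_pos.2 (hr k)).le hstep <|
        (hdist _ ▸ hlin _ (hxX _)).trans (hiter k _ (hXsX (hproj _).1))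
    exact hfix ▸ (hproj _).1
  refine ⟨fun k hk ↦ ?_, ?_⟩
  · obtain ⟨j, rfl⟩ := Nat.exists_eq_add_of_lt hk
    exact hland _ (hk₀.1 _ (Nat.le_add_right _ _))
  · have hcount := hfejer.card_mul_sq_le (div_pos hγ hε) hland hk₀ (hproj (x 0)).1
    rw [hdist, le_div_iff₀ (by positivity)]
    rw [div_pow, ← mul_div_assoc, div_le_iff₀ (by positivity)] at hcount
    exact hcount

theorem stmt14 {n : ℕ} (X : Set (EuclideanSpace ℝ (Fin n)))
    (hXne : X.Nonempty) (hXcl : IsClosed X) (hXconv : Convex ℝ X)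
    (ψ : EuclideanSpace ℝ (Fin n) → EuclideanSpace ℝ (Fin n) → ℝ)
    (hdiag : ∀ x ∈ X, ψ x x = 0)
    (Xs : Set (EuclideanSpace ℝ (Fin n)))
    (hXs : Xs = {xs | xs ∈ X ∧ ∀ y ∈ X, ψ xs y ≤ 0})
    (hXsne : Xs.Nonempty) (hXscl : IsClosed Xs) (hXsconv : Convex ℝ Xs)
    (hpm : ∀ x ∈ X, ∀ xs ∈ Xs, 0 ≤ ψ x xs)
    (proj : EuclideanSpace ℝ (Fin n) → EuclideanSpace ℝ (Fin n))
    (hproj : ∀ x, proj x ∈ Xs ∧ ∀ w ∈ Xs, dist x (proj x) ≤ dist x w)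
    (γ : ℝ) (hγ : 0 < γ)
    (hlin : ∀ x ∈ X, γ * Metric.infDist x Xs ≤ ψ x (proj x))
    (x : ℕ → EuclideanSpace ℝ (Fin n)) (hxX : ∀ k, x k ∈ X)
    (r : ℕ → ℝ) (hr : ∀ k, 0 < r k)
    (ε : ℝ) (hε : 0 < ε) (hrε : ∀ k, 1 / r k < ε)
    (hiter : ∀ k, ∀ z ∈ X,
      ψ (x (k + 1)) z ≤ (1 / r k) * (inner ℝ (z - x (k + 1)) (x (k + 1) - x k) : ℝ))
    (k₀ : ℕ)
    (hk₀ : IsLeast {m : ℕ | ∀ k ≥ m, ‖x (k + 1) - x k‖ < γ / ε} k₀) :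
    (∀ k > k₀, x k ∈ Xs) ∧
      (k₀ : ℝ) ≤ Metric.infDist (x 0) Xs ^ 2 * ε ^ 2 / γ ^ 2 :=
  stmt14_general X ψ Xs hXs hpm proj hproj γ hγ hlin x hxX r hr ε hε hrε hiter k₀ hk₀
end
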